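/- arXiv:1603.07023 — 6 statements merged into one kernel-verified Lean document; each statement's English description precedes it below -/
import Mathlib

section
/- For a real parameter r, integers N ≥ 2, 1 ≤ j ≤ N−1, and 0 ≤ m ≤ N−1, the following sum-of-squares identity holds: ∑_{n=0}^m (N−2n)·(φ^N_{n,j})² = (N−j)·(φ^{N−1}_{m,j})² + r·j·(φ^{N−1}_{m,j−1})² + ((1−r)/(1+r))·j·∑_{n=0}^m ( r·(φ^N_{n,j−1})² + (φ^N_{n,j})² ), provided r ≠ −1. -/
/-- Krawtchouk values with parameter `r`:
`φ^N_{n,j} = ∑_k (-r)^k C(j,k) C(N-j, n-k)`, the coefficient of `z^n` in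
`(1+z)^(N-j) (1-rz)^j`.  The index `n` is an integer, with `φ^N_{n,j} = 0`
for `n < 0` (and automatically for `n > N`). -/
noncomputable def krawtchouk (r : ℝ) (N : ℕ) (n : ℤ) (j : ℕ) : ℝ :=
  ∑ k ∈ Finset.range (j + 1),
    if (k : ℤ) ≤ n then (-r) ^ k * (j.choose k : ℝ) * ((N - j).choose (n - k).toNat : ℝ)
    else 0

/-- Natural-index version of `krawtchouk`. -/
noncomputable def K (r : ℝ) (N n j : ℕ) : ℝ :=
  ∑ k ∈ Finset.range (j + 1),
    if k ≤ n then (-r) ^ k * (j.choose k : ℝ) * ((N - j).choose (n - k) : ℝ) else 0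

lemma krawtchouk_eq_K (r : ℝ) (N n j : ℕ) : krawtchouk r N (n : ℤ) j = K r N n j := by
  refine Finset.sum_congr rfl fun k _ => ?_
  by_cases h : k ≤ n
  · have h1 : (k : ℤ) ≤ (n : ℤ) := by exact_mod_cast h
    have h2 : ((n : ℤ) - (k : ℤ)).toNat = n - k := by omega
    simp [h, h1, h2]
  · have h1 : ¬ ((k : ℤ) ≤ (n : ℤ)) := by exact_mod_cast h
    simp [h, h1]

lemma K_zero (r : ℝ) (N j : ℕ) : K r N 0 j = 1 := by
  unfold K
  rw [Finset.sum_range_succ']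
  simp

lemma ch1 (j k : ℕ) (hj : 1 ≤ j) : j * (j - 1).choose k = (j - k) * j.choose k := by
  obtain ⟨jj, rfl⟩ : ∃ jj, j = jj + 1 := ⟨j - 1, by omega⟩
  simp only [Nat.add_sub_cancel]
  have h1 := Nat.add_one_mul_choose_eq jj k
  have h2 := Nat.choose_succ_right_eq (jj + 1) k
  rw [h1, h2, Nat.mul_comm]

lemma ch2 (j k : ℕ) (hj : 1 ≤ j) : j * (j - 1).choose k = (k + 1) * j.choose (k + 1) := by
  obtain ⟨jj, rfl⟩ : ∃ jj, j = jj + 1 := ⟨j - 1, by omega⟩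
  simp only [Nat.add_sub_cancel]
  have h1 := Nat.add_one_mul_choose_eq jj k
  rw [h1, Nat.mul_comm]

/-- Pascal recurrence in `N`. -/
lemma K_pascal (r : ℝ) (N j n : ℕ) (hj : j + 1 ≤ N) :
    K r N (n + 1) j = K r (N - 1) (n + 1) j + K r (N - 1) n j := by
  simp only [K, ← Finset.sum_add_distrib]
  refine Finset.sum_congr rfl fun k _ => ?_
  by_cases h1 : k ≤ n
  · have h2 : k ≤ n + 1 := by omega
    simp only [h1, h2, if_true]
    have e1 : N - j = (N - 1 - j) + 1 := by omega
    have e2 : n + 1 - k = (n - k) + 1 := by omega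
    rw [e1, e2, Nat.choose_succ_succ]
    push_cast; ring
  · by_cases h2 : k ≤ n + 1
    · simp only [h1, h2, if_true, if_false]
      have e2 : n + 1 - k = 0 := by omega
      rw [e2]
      simp
    · simp [h1, h2]

/-- Recurrence in `j` (multiplying the generating function by `1 - rz`). -/
lemma K_vander (r : ℝ) (N j n : ℕ) (hj : 1 ≤ j) :
    K r N (n + 1) j = K r (N - 1) (n + 1) (j - 1) - r * K r (N - 1) n (j - 1) := by
  obtain ⟨jj, rfl⟩ : ∃ jj, j = jj + 1 := ⟨j - 1, by omega⟩
  simp only [K, Nat.add_sub_cancel]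
  have hNs : N - 1 - jj = N - (jj + 1) := by omega
  rw [hNs]
  rw [Finset.sum_range_succ'
    (fun k => if k ≤ n + 1 then (-r) ^ k * ((jj + 1).choose k : ℝ)
      * ((N - (jj + 1)).choose (n + 1 - k) : ℝ) else 0) (jj + 1)]
  rw [Finset.sum_range_succ'
    (fun k => if k ≤ n + 1 then (-r) ^ k * (jj.choose k : ℝ)
      * ((N - (jj + 1)).choose (n + 1 - k) : ℝ) else 0) jj]
  have key : ∀ k ∈ Finset.range (jj + 1),
      (if k + 1 ≤ n + 1 then (-r) ^ (k + 1) * ((jj + 1).choose (k + 1) : ℝ)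
        * ((N - (jj + 1)).choose (n + 1 - (k + 1)) : ℝ) else 0)
      = (if k + 1 ≤ n + 1 then (-r) ^ (k + 1) * (jj.choose (k + 1) : ℝ)
          * ((N - (jj + 1)).choose (n + 1 - (k + 1)) : ℝ) else 0)
        - r * (if k ≤ n then (-r) ^ k * (jj.choose k : ℝ)
          * ((N - (jj + 1)).choose (n - k) : ℝ) else 0) := by
    intro k _
    by_cases h1 : k ≤ n
    · have h2 : k + 1 ≤ n + 1 := by omega
      have e : n + 1 - (k + 1) = n - k := by omega
      simp only [h1, h2, if_true, e, Nat.choose_succ_succ]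
      push_cast; ring
    · have h2 : ¬ (k + 1 ≤ n + 1) := by omega
      simp [h1, h2]
  rw [Finset.sum_congr rfl key, Finset.sum_sub_distrib]
  have top : ∑ k ∈ Finset.range (jj + 1),
      (if k + 1 ≤ n + 1 then (-r) ^ (k + 1) * (jj.choose (k + 1) : ℝ)
        * ((N - (jj + 1)).choose (n + 1 - (k + 1)) : ℝ) else 0)
      = ∑ k ∈ Finset.range jj,
      (if k + 1 ≤ n + 1 then (-r) ^ (k + 1) * (jj.choose (k + 1) : ℝ)
        * ((N - (jj + 1)).choose (n + 1 - (k + 1)) : ℝ) else 0) := by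
    rw [Finset.sum_range_succ]
    simp [Nat.choose_succ_self]
  rw [top, Finset.mul_sum]
  simp only [Nat.choose_zero_right, Nat.cast_one]
  ring

/-- Per-`k` form of the linear (derivative) identity. -/
lemma perk (r Nr : ℝ) (s j k m : ℕ) (hkj : k ≤ j) (hNr : Nr = (s : ℝ) + j + 1) :
    (Nr - 2 * ((m : ℝ) + 1)) *
      ((if k ≤ m + 1 then (-r) ^ k * (j.choose k : ℝ) * (s.choose (m + 1 - k) : ℝ) else 0)
        + (if k ≤ m then (-r) ^ k * (j.choose k : ℝ) * (s.choose (m - k) : ℝ) else 0))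
    = (Nr - j) *
      ((if k ≤ m + 1 then (-r) ^ k * (j.choose k : ℝ) * (s.choose (m + 1 - k) : ℝ) else 0)
        - (if k ≤ m then (-r) ^ k * (j.choose k : ℝ) * (s.choose (m - k) : ℝ) else 0))
      + ((if k ≤ m + 1 then (-r) ^ k * ((j - k : ℕ) : ℝ) * (j.choose k : ℝ)
            * ((s + 1).choose (m + 1 - k) : ℝ) else 0)
        - (if k ≤ m + 1 then (-r) ^ k * (k : ℝ) * (j.choose k : ℝ)
            * ((s + 1).choose (m + 1 - k) : ℝ) else 0)) := by
  subst hNr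
  by_cases h1 : k ≤ m
  · obtain ⟨t, rfl⟩ : ∃ t, m = k + t := ⟨m - k, by omega⟩
    have h2 : k ≤ k + t + 1 := by omega
    have e1 : k + t + 1 - k = t + 1 := by omega
    have e2 : k + t - k = t := by omega
    simp only [h1, h2, if_true, e1, e2, Nat.choose_succ_succ]
    have ecast : ((j - k : ℕ) : ℝ) = (j : ℝ) - k := by
      rw [Nat.cast_sub hkj]
    rw [ecast]
    by_cases hts : t ≤ s
    · have key : (s.choose (t + 1) : ℝ) * ((t : ℝ) + 1)
          = (s.choose t : ℝ) * ((s : ℝ) - t) := by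
        have := Nat.choose_succ_right_eq s t
        have hc : ((s.choose (t + 1) * (t + 1) : ℕ) : ℝ) = ((s.choose t * (s - t) : ℕ) : ℝ) := by
          exact_mod_cast congrArg (Nat.cast : ℕ → ℝ) this
        push_cast [Nat.cast_sub hts] at hc
        linarith [hc]
      push_cast
      linear_combination (-2 * (-r) ^ k * (j.choose k : ℝ)) * key
    · have z1 : s.choose (t + 1) = 0 := Nat.choose_eq_zero_of_lt (by omega)
      have z2 : s.choose t = 0 := Nat.choose_eq_zero_of_lt (by omega)
      rw [z1, z2]
      push_cast
      ring
  · by_cases h2 : k ≤ m + 1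
    · have hk : k = m + 1 := by omega
      subst hk
      have e1 : m + 1 - (m + 1) = 0 := by omega
      simp only [h1, h2, if_true, if_false, e1, Nat.choose_zero_right]
      have ecast : ((j - (m + 1) : ℕ) : ℝ) = (j : ℝ) - ((m : ℝ) + 1) := by
        rw [Nat.cast_sub hkj]; push_cast; ring
      rw [ecast]
      push_cast
      ring
    · simp [h1, h2]

/-- The linear "derivative" identity. -/
lemma K_lin (r : ℝ) (N j m : ℕ) (hj1 : 1 ≤ j) (hjN : j + 1 ≤ N) :
    ((N : ℝ) - 2 * ((m : ℝ) + 1)) * (K r (N - 1) (m + 1) j + K r (N - 1) m j)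
    = ((N : ℝ) - j) * (K r (N - 1) (m + 1) j - K r (N - 1) m j)
      + (j : ℝ) * (K r (N - 1) (m + 1) (j - 1) + r * K r (N - 1) m (j - 1)) := by
  have hN : N = (N - 1 - j) + j + 1 := by omega
  have hNj : N - 1 - (j - 1) = (N - 1 - j) + 1 := by omega
  -- c-part
  have hc : (j : ℝ) * K r (N - 1) (m + 1) (j - 1)
      = ∑ k ∈ Finset.range (j + 1),
          (if k ≤ m + 1 then (-r) ^ k * ((j - k : ℕ) : ℝ) * (j.choose k : ℝ)
            * (((N - 1 - j) + 1).choose (m + 1 - k) : ℝ) else 0) := by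
    unfold K
    rw [hNj, Finset.mul_sum]
    conv_rhs => rw [show j + 1 = (j - 1) + 1 + 1 from by omega, Finset.sum_range_succ]
    have ztop : (if (j - 1) + 1 ≤ m + 1 then (-r) ^ ((j - 1) + 1) * ((j - ((j - 1) + 1) : ℕ) : ℝ)
        * (j.choose ((j - 1) + 1) : ℝ) * (((N - 1 - j) + 1).choose (m + 1 - ((j - 1) + 1)) : ℝ)
        else 0) = 0 := by
      have hz : j - ((j - 1) + 1) = 0 := by omega
      rw [hz]; simp
    rw [ztop, add_zero]
    refine Finset.sum_congr rfl fun k hk => ?_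
    have hkj : k ≤ j := by
      have := Finset.mem_range.mp hk; omega
    by_cases h : k ≤ m + 1
    · simp only [h, if_true]
      have hnat : (j : ℝ) * ((j - 1).choose k : ℝ) = ((j - k : ℕ) : ℝ) * (j.choose k : ℝ) := by
        exact_mod_cast congrArg (Nat.cast : ℕ → ℝ) (ch1 j k hj1)
      linear_combination ((-r) ^ k * ((((N - 1 - j) + 1).choose (m + 1 - k) : ℕ) : ℝ)) * hnat
    · simp [h]
  -- d-part
  have hd : (j : ℝ) * (r * K r (N - 1) m (j - 1))
      = - ∑ k ∈ Finset.range (j + 1),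
          (if k ≤ m + 1 then (-r) ^ k * (k : ℝ) * (j.choose k : ℝ)
            * (((N - 1 - j) + 1).choose (m + 1 - k) : ℝ) else 0) := by
    unfold K
    rw [hNj]
    rw [Finset.sum_range_succ'
      (fun k => if k ≤ m + 1 then (-r) ^ k * (k : ℝ) * (j.choose k : ℝ)
        * (((N - 1 - j) + 1).choose (m + 1 - k) : ℝ) else 0) j]
    simp only [Nat.cast_zero]
    rw [show (if 0 ≤ m + 1 then (-r) ^ 0 * (0 : ℝ) * (j.choose 0 : ℝ)
        * (((N - 1 - j) + 1).choose (m + 1 - 0) : ℝ) else 0) = 0 from by simp, add_zero]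
    conv_lhs => rw [show (j - 1) + 1 = j from by omega]
    rw [← Finset.sum_neg_distrib, Finset.mul_sum, Finset.mul_sum]
    refine Finset.sum_congr rfl fun k hk => ?_
    by_cases h : k ≤ m
    · have h' : k + 1 ≤ m + 1 := by omega
      have e : m + 1 - (k + 1) = m - k := by omega
      simp only [h, h', if_true, e]
      have hnat : (j : ℝ) * ((j - 1).choose k : ℝ) = ((k : ℝ) + 1) * (j.choose (k + 1) : ℝ) := by
        exact_mod_cast congrArg (Nat.cast : ℕ → ℝ) (ch2 j k hj1)
      push_cast
      linear_combination (r * (-r) ^ k * ((((N - 1 - j) + 1).choose (m - k) : ℕ) : ℝ)) * hnat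
    · have h' : ¬ (k + 1 ≤ m + 1) := by omega
      simp [h, h']
  -- assemble
  have hNr : (N : ℝ) = ((N - 1 - j : ℕ) : ℝ) + (j : ℝ) + 1 := by exact_mod_cast hN
  rw [mul_add ((j : ℝ)), hc, hd, ← sub_eq_add_neg]
  unfold K
  rw [← Finset.sum_add_distrib, Finset.mul_sum, ← Finset.sum_sub_distrib, Finset.mul_sum,
    ← Finset.sum_sub_distrib, ← Finset.sum_add_distrib]
  refine Finset.sum_congr rfl fun k hk => ?_
  exact perk r (N : ℝ) (N - 1 - j) j k m (by have := Finset.mem_range.mp hk; omega) hNr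

lemma main_K (r : ℝ) (N j : ℕ) (hr : (1 : ℝ) + r ≠ 0) (hj1 : 1 ≤ j) (hjN : j + 1 ≤ N) :
    ∀ m : ℕ, ∑ n ∈ Finset.range (m + 1), ((N : ℝ) - 2 * n) * (K r N n j) ^ 2 =
      ((N : ℝ) - j) * (K r (N - 1) m j) ^ 2
        + r * j * (K r (N - 1) m (j - 1)) ^ 2
        + ((1 - r) / (1 + r)) * j *
            ∑ n ∈ Finset.range (m + 1),
              (r * (K r N n (j - 1)) ^ 2 + (K r N n j) ^ 2) := by
  intro m
  induction m with
  | zero =>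
      simp only [zero_add, Finset.sum_range_one, K_zero, Nat.cast_zero]
      field_simp
      ring
  | succ m ih =>
      rw [Finset.sum_range_succ, Finset.sum_range_succ
        (fun n => r * (K r N n (j - 1)) ^ 2 + (K r N n j) ^ 2), ih]
      have hP : K r N (m + 1) j = K r (N - 1) (m + 1) j + K r (N - 1) m j :=
        K_pascal r N j m hjN
      have hQ : K r N (m + 1) j
          = K r (N - 1) (m + 1) (j - 1) - r * K r (N - 1) m (j - 1) :=
        K_vander r N j m hj1
      have hP' : K r N (m + 1) (j - 1)
          = K r (N - 1) (m + 1) (j - 1) + K r (N - 1) m (j - 1) := by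
        have h := K_pascal r N (j - 1) m (by omega)
        simpa using h
      have hL := K_lin r N j m hj1 hjN
      set a := K r (N - 1) (m + 1) j
      set b := K r (N - 1) m j
      set c := K r (N - 1) (m + 1) (j - 1)
      set d := K r (N - 1) m (j - 1)
      rw [hP', hQ]
      have h1 : a + b = c - r * d := by rw [← hP, ← hQ]
      have step1 : ((N : ℝ) - 2 * ((m : ℝ) + 1)) * (c - r * d) ^ 2
          = ((N : ℝ) - j) * (a ^ 2 - b ^ 2) + (j : ℝ) * (c + r * d) * (c - r * d) := by
        linear_combination (c - r * d) * hL
          - (((N : ℝ) - 2 * ((m : ℝ) + 1)) * (c - r * d) + ((N : ℝ) - j) * (a - b)) * h1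
      have step2 : (j : ℝ) * (c + r * d) * (c - r * d)
          = r * j * (c ^ 2 - d ^ 2)
            + ((1 - r) / (1 + r)) * j * (r * (c + d) ^ 2 + (c - r * d) ^ 2) := by
        field_simp
        ring
      push_cast
      linear_combination step1 + step2

/-- Sum-of-squares identity for Krawtchouk polynomials with general parameter `r ≠ −1`. -/
theorem krawtchouk_sum_of_squares (r : ℝ) (N j m : ℕ)
    (hr : r ≠ -1) (hN : 2 ≤ N) (hj1 : 1 ≤ j) (hj : j ≤ N - 1) (hm : m ≤ N - 1) :
    ∑ n ∈ Finset.range (m + 1), ((N : ℝ) - 2 * n) * (krawtchouk r N n j) ^ 2 =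
      ((N : ℝ) - j) * (krawtchouk r (N - 1) m j) ^ 2
        + r * j * (krawtchouk r (N - 1) m (j - 1)) ^ 2
        + ((1 - r) / (1 + r)) * j *
            ∑ n ∈ Finset.range (m + 1),
              (r * (krawtchouk r N n (j - 1)) ^ 2 + (krawtchouk r N n j) ^ 2) := by
  have hr' : (1 : ℝ) + r ≠ 0 := fun h => hr (by linarith)
  simp only [krawtchouk_eq_K]
  exact main_K r N j hr' hj1 (by omega) m
end

section
/- For all integers N ≥ 0 and 0 ≤ j ≤ N, the sum of squares along column j of the symmetric Krawtchouk matrix satisfies C(N,j) · ∑_{i=0}^N (Φ^N_{i,j})² = C(2N−2j, N−j) · C(2j, j). -/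
/-- Symmetric Krawtchouk values:
`Φ^N_{n,j} = ∑_k (-1)^k C(j,k) C(N-j, n-k)`, the coefficient of `z^n` in
`(1+z)^(N-j) (1-z)^j`. -/
def symKrawtchouk (N n j : ℕ) : ℤ :=
  ∑ k ∈ Finset.range (j + 1),
    if k ≤ n then (-1 : ℤ) ^ k * (j.choose k) * ((N - j).choose (n - k)) else 0

open Polynomial

lemma coeff_one_sub_X_pow (j k : ℕ) :
    ((1 - X : ℤ[X]) ^ j).coeff k = (-1)^k * (j.choose k) := by
  have h : (1 - X : ℤ[X]) = (-1) * (X + C (-1)) := by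
    simp [mul_add]; ring
  rw [h, mul_pow, ← C_1, ← C_neg, ← C_pow, coeff_C_mul, coeff_X_add_C_pow]
  by_cases hk : k ≤ j
  · have hsq : ((-1:ℤ)^(j-k)) * ((-1:ℤ)^(j-k)) = 1 := by
      rw [← mul_pow]; norm_num
    have hj : (-1:ℤ)^j = (-1)^(j-k) * (-1)^k := by
      rw [← pow_add]; congr 1; omega
    rw [hj]
    linear_combination ((-1:ℤ)^k * (j.choose k)) * hsq
  · have : j.choose k = 0 := Nat.choose_eq_zero_of_lt (by omega)
    simp [this]

noncomputable def Qp (m j : ℕ) : Polynomial ℤ := (1 + X) ^ (2*m) * (1 - X) ^ (2*j)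

lemma Qp_eq (m j : ℕ) : Qp m j = (1 + X) ^ (2*m) * (X - 1) ^ (2*j) := by
  unfold Qp
  congr 1
  have : (1 - X : ℤ[X]) = -(X - 1) := by ring
  rw [this, Even.neg_pow (even_two_mul j)]

lemma Qp_natDegree (m j : ℕ) : (Qp m j).natDegree = 2*m + 2*j := by
  rw [Qp_eq]
  have h1 : ((1 + X : ℤ[X]) ^ (2*m)).Monic := by
    apply Polynomial.Monic.pow
    simpa [add_comm] using (Polynomial.monic_X_add_C (1 : ℤ))
  have h2 : ((X - 1 : ℤ[X]) ^ (2*j)).Monic := by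
    apply Polynomial.Monic.pow
    simpa using (Polynomial.monic_X_sub_C (1 : ℤ))
  rw [Polynomial.Monic.natDegree_mul h1 h2, Polynomial.natDegree_pow, Polynomial.natDegree_pow]
  have d1 : (1 + X : ℤ[X]).natDegree = 1 := by
    simpa [add_comm] using Polynomial.natDegree_X_add_C (1 : ℤ)
  have d2 : (X - 1 : ℤ[X]).natDegree = 1 := by
    simpa using Polynomial.natDegree_X_sub_C (1 : ℤ)
  rw [d1, d2]; ring

lemma reverse_pow' (p : ℤ[X]) (n : ℕ) : (p ^ n).reverse = p.reverse ^ n := by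
  induction n with
  | zero => rw [pow_zero, pow_zero, ← Polynomial.C_1, Polynomial.reverse_C]
  | succ n ih => rw [pow_succ, Polynomial.reverse_mul_of_domain, ih, pow_succ]

lemma reverse_X' : (X:ℤ[X]).reverse = 1 := by
  have : (X:ℤ[X]) = X^1 := (pow_one X).symm
  rw [this, Polynomial.reverse, Polynomial.reflect_monomial]
  simp

lemma reverse_one_add_X : (1 + X : ℤ[X]).reverse = 1 + X := by
  have : (1 + X : ℤ[X]) = X + C 1 := by simp [add_comm]
  rw [this, Polynomial.reverse_add_C, reverse_X']
  simp [add_comm]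

lemma reverse_X_sub_one : (X - 1 : ℤ[X]).reverse = -(X - 1) := by
  have : (X - 1 : ℤ[X]) = X + C (-1) := by simp [sub_eq_add_neg]
  rw [this, Polynomial.reverse_add_C, reverse_X']
  simp

lemma Qp_reverse (m j : ℕ) : (Qp m j).reverse = Qp m j := by
  rw [Qp_eq, Polynomial.reverse_mul_of_domain, reverse_pow', reverse_pow',
    reverse_one_add_X, reverse_X_sub_one, Even.neg_pow (even_two_mul j), ← Qp_eq]

lemma Qp_palindrome (m j n : ℕ) (hn : n ≤ 2*m + 2*j) :
    (Qp m j).coeff n = (Qp m j).coeff (2*m + 2*j - n) := by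
  conv_lhs => rw [← Qp_reverse]
  rw [Polynomial.coeff_reverse, Qp_natDegree, Polynomial.revAt_le hn]

lemma key (a b : ℕ) : (1 - X^2 : ℤ[X]) * derivative ((1+X)^a * (1-X)^b) =
    (C (a:ℤ) * (1-X) - C (b:ℤ) * (1+X)) * ((1+X)^a * (1-X)^b) := by
  rcases a with _|a <;> rcases b with _|b <;>
    simp [derivative_pow, derivative_mul, Polynomial.derivative_one, Polynomial.derivative_X,
      derivative_sub, C_eq_natCast] <;> ring

lemma rec1 (m j e : ℕ) (hd : m + j = e + 1) :
    ((e:ℤ)+2) * (Qp m j).coeff e = ((m:ℤ) - j) * (Qp m j).coeff (e+1) := by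
  have H : ((1 - X^2 : ℤ[X]) * derivative (Qp m j)).coeff (e+1)
      = ((C ((2*m:ℕ):ℤ) * (1-X) - C ((2*j:ℕ):ℤ) * (1+X)) * Qp m j).coeff (e+1) := by
    rw [Qp]; exact congrArg (fun p => p.coeff (e+1)) (key (2*m) (2*j))
  set Q := Qp m j with hQ
  set D := derivative Q with hD
  have L1 : (1 - X^2 : ℤ[X]) * D = D - D * X^2 := by ring
  rw [L1, coeff_sub, coeff_mul_X_pow'] at H
  have T : (if 2 ≤ e+1 then D.coeff (e+1-2) else 0) = (e:ℤ) * Q.coeff e := by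
    rcases e with _|f
    · simp
    · rw [if_pos (by omega), show f+1+1-2 = f from by omega, hD, coeff_derivative]
      push_cast; ring
  rw [T] at H
  have R1 : (C ((2*m:ℕ):ℤ) * (1-X) - C ((2*j:ℕ):ℤ) * (1+X)) * Q
      = C (((2*m:ℕ):ℤ) - ((2*j:ℕ):ℤ)) * Q - C (((2*m:ℕ):ℤ) + ((2*j:ℕ):ℤ)) * (X * Q) := by
    rw [C_sub, C_add]; ring
  rw [R1, coeff_sub, coeff_C_mul, coeff_C_mul, coeff_X_mul, hD, coeff_derivative] at H
  push_cast at H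
  -- H : Q.coeff (e+1+1) * (e+1+1) - e * Q.coeff e = (2m - 2j) * Q.coeff (e+1) - (2m+2j) * Q.coeff e
  have hpal : Q.coeff (e+2) = Q.coeff e := by
    have h1 := Qp_palindrome m j (e+2) (by omega)
    rw [show 2*m + 2*j - (e+2) = e from by omega] at h1
    rw [← hQ] at h1
    exact h1
  have hmj : (m:ℤ) + j = (e:ℤ) + 1 := by exact_mod_cast congrArg (Nat.cast : ℕ → ℤ) hd
  apply mul_left_cancel₀ (two_ne_zero : (2:ℤ) ≠ 0)
  linear_combination H + (-(e:ℤ)-2) * hpal + (-2 * Q.coeff e) * hmj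

lemma recS (m j : ℕ) :
    ((m:ℤ)+j+1) * (Qp m (j+1)).coeff (m+j+1) = (-2) * (2*(j:ℤ)+1) * (Qp m j).coeff (m+j) := by
  rcases hd : m + j with _|e
  · have hm : m = 0 := by omega
    have hj : j = 0 := by omega
    subst hm; subst hj
    have c1 : (Qp 0 1).coeff 1 = -2 := by
      rw [Qp]
      norm_num [coeff_one_sub_X_pow]
    have c0 : (Qp 0 0).coeff 0 = 1 := by
      rw [Qp]; norm_num
    norm_num [c1, c0]
  · set Q := Qp m j with hQ
    have hex : Qp m (j+1) = Q - C 2 * (X * Q) + Q * X^2 := by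
      rw [hQ]; unfold Qp
      rw [show 2*(j+1) = 2*j + 2 from by ring, pow_add]
      simp only [map_ofNat]
      ring
    have hc : (Qp m (j+1)).coeff (e+2) = Q.coeff (e+2) - 2*Q.coeff (e+1) + Q.coeff e := by
      rw [hex, coeff_add, coeff_sub, coeff_C_mul, coeff_X_mul, coeff_mul_X_pow',
        if_pos (by omega : 2 ≤ e+2), show e+2-2 = e from by omega]
    have hpal : Q.coeff (e+2) = Q.coeff e := by
      have h1 := Qp_palindrome m j (e+2) (by omega)
      rw [show 2*m + 2*j - (e+2) = e from by omega] at h1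
      rw [← hQ] at h1
      exact h1
    have hr := rec1 m j e hd
    rw [← hQ] at hr
    have hmj : (m:ℤ) + j = (e:ℤ) + 1 := by exact_mod_cast congrArg (Nat.cast : ℕ → ℤ) hd
    rw [show e + 1 + 1 = e + 2 from rfl]
    linear_combination ((m:ℤ)+j+1) * hc + ((m:ℤ)+j+1) * hpal + 2*hr
      + (2*Q.coeff e) * hmj

lemma closed (m j : ℕ) :
    (((m+j).choose j : ℕ) : ℤ) * (Qp m j).coeff (m+j) =
      (-1)^j * (((2*m).choose m : ℕ) : ℤ) * (((2*j).choose j : ℕ) : ℤ) := by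
  induction j with
  | zero =>
    have : (Qp m 0).coeff m = ((2*m).choose m : ℤ) := by
      rw [Qp]; norm_num [coeff_one_add_X_pow]
    simp [this]
  | succ j ih =>
    apply mul_left_cancel₀ (show ((j:ℤ)+1) ≠ 0 by positivity)
    have h1 : ((m+j+1 : ℕ) : ℤ) * (((m+j).choose j : ℕ) : ℤ)
        = ((j:ℤ)+1) * (((m+j+1).choose (j+1) : ℕ) : ℤ) := by
      have h := Nat.add_one_mul_choose_eq (m+j) j
      have h1' : (((m+j+1) * ((m+j).choose j) : ℕ) : ℤ)
          = (((m+j+1).choose (j+1) * (j+1) : ℕ) : ℤ) := congrArg (Nat.cast : ℕ → ℤ) h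
      push_cast at h1'
      push_cast
      linarith [h1']
    have h2 : ((j:ℤ)+1) * (((2*(j+1)).choose (j+1) : ℕ) : ℤ)
        = 2*(2*(j:ℤ)+1) * (((2*j).choose j : ℕ) : ℤ) := by
      have := Nat.succ_mul_centralBinom_succ j
      simp only [Nat.centralBinom] at this
      exact_mod_cast congrArg (Nat.cast : ℕ → ℤ) this
    have hr := recS m j
    have e1 : m + (j+1) = m + j + 1 := rfl
    rw [e1, show (m+j+1).choose (j+1) = (m+j+1).choose (j+1) from rfl]
    push_cast at h1 hr ⊢
    linear_combination (-(Qp m (j+1)).coeff (m+j+1)) * h1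
      + (((m+j).choose j : ℕ) : ℤ) * hr
      + (-2*(2*(j:ℤ)+1)) * ih
      + ((-1:ℤ)^j * (((2*m).choose m : ℕ) : ℤ)) * h2

lemma symK_eq (N j n : ℕ) :
    symKrawtchouk N n j
      = ∑ k ∈ Finset.range (n+1), (-1:ℤ)^k * (j.choose k) * ((N-j).choose (n-k)) := by
  unfold symKrawtchouk
  have h1 : ∑ k ∈ Finset.range (j+1),
        (if k ≤ n then (-1:ℤ)^k * (j.choose k) * ((N-j).choose (n-k)) else 0)
      = ∑ k ∈ Finset.range (n+j+2),
        (if k ≤ n then (-1:ℤ)^k * (j.choose k) * ((N-j).choose (n-k)) else 0) := by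
    apply Finset.sum_subset (Finset.range_subset_range.2 (by omega))
    intro x hx hx2
    simp only [Finset.mem_range] at hx hx2
    have : j.choose x = 0 := Nat.choose_eq_zero_of_lt (by omega)
    simp [this]
  have h2 : ∑ k ∈ Finset.range (n+1),
        ((-1:ℤ)^k * (j.choose k) * ((N-j).choose (n-k)))
      = ∑ k ∈ Finset.range (n+j+2),
        (if k ≤ n then (-1:ℤ)^k * (j.choose k) * ((N-j).choose (n-k)) else 0) := by
    rw [← Finset.sum_subset (Finset.range_subset_range.2 (show n+1 ≤ n+j+2 by omega))
      (fun x _ hx2 => by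
        simp only [Finset.mem_range] at hx2
        rw [if_neg (by omega)])]
    apply Finset.sum_congr rfl
    intro x hx
    simp only [Finset.mem_range] at hx
    rw [if_pos (by omega)]
  rw [h1, ← h2]

lemma coeff_kraw (N j n : ℕ) :
    ((1-X:ℤ[X])^j * (1+X)^(N-j)).coeff n = symKrawtchouk N n j := by
  rw [coeff_mul, Finset.Nat.sum_antidiagonal_eq_sum_range_succ_mk, symK_eq]
  apply Finset.sum_congr rfl
  intro k hk
  rw [coeff_one_sub_X_pow, coeff_one_add_X_pow]

lemma reverse_one_sub_X : (1 - X : ℤ[X]).reverse = X - 1 := by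
  have h : (1 - X : ℤ[X]) = -(X - 1) := by ring
  rw [h, Polynomial.reverse_neg, reverse_X_sub_one, neg_neg]

lemma p_natDegree (N j : ℕ) (hj : j ≤ N) :
    ((1-X:ℤ[X])^j * (1+X)^(N-j)).natDegree = N := by
  have h1 : ((1-X:ℤ[X])^j) ≠ 0 := pow_ne_zero _ (by
    intro h
    have := congrArg (fun p => Polynomial.coeff p 0) h
    simp at this)
  have h2 : ((1+X:ℤ[X])^(N-j)) ≠ 0 := pow_ne_zero _ (by
    intro h
    have := congrArg (fun p => Polynomial.coeff p 0) h
    simp at this)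
  rw [Polynomial.natDegree_mul h1 h2, Polynomial.natDegree_pow, Polynomial.natDegree_pow]
  have d1 : (1 - X : ℤ[X]).natDegree = 1 := by
    rw [show (1 - X : ℤ[X]) = -(X - 1) from by ring, Polynomial.natDegree_neg]
    simpa using Polynomial.natDegree_X_sub_C (1 : ℤ)
  have d2 : (1 + X : ℤ[X]).natDegree = 1 := by
    simpa [add_comm] using Polynomial.natDegree_X_add_C (1 : ℤ)
  rw [d1, d2]
  omega

lemma sq_sum (N j : ℕ) (hj : j ≤ N) :
    ∑ i ∈ Finset.range (N+1), (symKrawtchouk N i j)^2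
      = (-1:ℤ)^j * (Qp (N-j) j).coeff N := by
  set p : ℤ[X] := (1-X)^j * (1+X)^(N-j) with hp
  have hrev : p.reverse = C ((-1:ℤ)^j) * p := by
    rw [hp, Polynomial.reverse_mul_of_domain, reverse_pow', reverse_pow',
      reverse_one_sub_X, reverse_one_add_X]
    rw [show (X - 1 : ℤ[X]) = (-1) * (1 - X) from by ring, mul_pow,
      show ((-1:ℤ[X]))^j = C ((-1:ℤ)^j) from by rw [show (-1 : ℤ[X]) = C (-1) from by simp, ← C_pow]]
    ring
  have hmul : p * p.reverse = C ((-1:ℤ)^j) * Qp (N-j) j := by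
    rw [hrev, Qp, hp]; ring
  have hco : (p * p.reverse).coeff N = ∑ i ∈ Finset.range (N+1), (p.coeff i)^2 := by
    rw [coeff_mul, Finset.Nat.sum_antidiagonal_eq_sum_range_succ_mk]
    apply Finset.sum_congr rfl
    intro i hi
    simp only [Finset.mem_range] at hi
    rw [Polynomial.coeff_reverse, p_natDegree N j hj,
      Polynomial.revAt_le (show N - i ≤ N by omega), show N - (N - i) = i from by omega]
    ring
  have := hco.symm.trans (by rw [hmul, coeff_C_mul])
  rw [← this]
  apply Finset.sum_congr rfl
  intro i hi
  rw [coeff_kraw]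

/-- Sum of squares along column `j`:
`C(N,j) · ∑_{i=0}^N (Φ^N_{i,j})² = C(2N−2j, N−j) · C(2j, j)`. -/
theorem symKrawtchouk_column_sq_sum (N j : ℕ) (hj : j ≤ N) :
    (N.choose j : ℤ) * ∑ i ∈ Finset.range (N + 1), (symKrawtchouk N i j) ^ 2 =
      ((2 * N - 2 * j).choose (N - j) : ℤ) * ((2 * j).choose j : ℤ) := by
  rw [sq_sum N j hj]
  have hc := closed (N-j) j
  rw [show N - j + j = N from by omega] at hc
  rw [show 2*(N-j) = 2*N - 2*j from by omega] at hc
  have hs : (-1:ℤ)^j * (-1:ℤ)^j = 1 := by rw [← mul_pow]; norm_num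
  linear_combination ((-1:ℤ)^j) * hc
    + (((2*N-2*j).choose (N-j) : ℤ) * ((2*j).choose j : ℤ)) * hs
end

section
/- For integers N ≥ 3, 2 ≤ j ≤ N−1, and 0 ≤ m ≤ N−1, the weighted partial column sums of the symmetric Krawtchouk values satisfy ∑_{n=0}^m (N−2n)·Φ^N_{n,j} = (N−j)·Φ^{N−1}_{m,j} + j·Φ^{N−1}_{m,j−2} = (N−1−2m)·Φ^{N−1}_{m,j−1} + Φ^{N−1}_{m,j−2}. -/
open Polynomial Finset in
private lemma symK_coeff_one_sub_X_pow (j k : ℕ) :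
    ((1 - X : ℤ[X])^j).coeff k = (-1)^k * j.choose k := by
  have h : (1 - X : ℤ[X])^j = ∑ i ∈ Finset.range (j+1), C ((-1)^i * (j.choose i : ℤ)) * X^i := by
    rw [sub_eq_add_neg, add_comm, add_pow]
    refine Finset.sum_congr rfl fun i hi => ?_
    rw [neg_pow]
    simp only [map_mul, map_pow, map_neg, map_one, map_natCast]
    ring
  rw [h, finset_sum_coeff]
  simp only [coeff_C_mul, coeff_X_pow, mul_ite, mul_one, mul_zero]
  rw [Finset.sum_ite_eq (Finset.range (j+1)) k]
  by_cases hk : k ≤ j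
  · simp [Finset.mem_range, Nat.lt_succ_iff, hk]
  · simp [Finset.mem_range, Nat.lt_succ_iff, hk, Nat.choose_eq_zero_of_lt (Nat.lt_of_not_le hk)]

open Polynomial Finset in
private lemma symK_sum_eq_coeff (N n j : ℕ) :
    (∑ k ∈ Finset.range (j + 1),
      if k ≤ n then (-1 : ℤ) ^ k * (j.choose k) * ((N - j).choose (n - k)) else 0)
    = (((1 - X)^j * (1 + X)^(N-j) : ℤ[X])).coeff n := by
  set F : ℕ → ℤ := fun k =>
    if k ≤ n then (-1 : ℤ) ^ k * (j.choose k) * ((N - j).choose (n - k)) else 0 with hF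
  have h1 : (∑ k ∈ Finset.range (j + 1), F k) = ∑ k ∈ Finset.range (j + n + 2), F k := by
    refine Finset.sum_subset (Finset.range_subset_range.2 (by omega)) fun k _ hk => ?_
    have : j < k := by simpa [Nat.lt_succ_iff] using hk
    simp [hF, Nat.choose_eq_zero_of_lt this]
  have h2 : (((1 - X)^j * (1 + X)^(N-j) : ℤ[X])).coeff n
      = ∑ k ∈ Finset.range (j + n + 2), F k := by
    rw [coeff_mul, Finset.Nat.sum_antidiagonal_eq_sum_range_succ_mk]
    have h3 : ∀ k ∈ Finset.range (n+1),
        ((1 - X : ℤ[X])^j).coeff k * ((1 + X : ℤ[X])^(N-j)).coeff (n - k) = F k := by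
      intro k hk
      have hkn : k ≤ n := by simpa [Nat.lt_succ_iff] using hk
      rw [symK_coeff_one_sub_X_pow, coeff_one_add_X_pow]
      simp [hF, hkn]
    rw [Finset.sum_congr rfl h3]
    refine Finset.sum_subset (Finset.range_subset_range.2 (by omega)) fun k _ hk => ?_
    have : n < k := by simpa [Nat.lt_succ_iff] using hk
    simp [hF, Nat.not_le.2 this]
  rw [h1, h2]

open Polynomial Finset in
private lemma symK_sum_coeff_one_sub_X_mul (p : ℤ[X]) (m : ℕ) :
    ∑ n ∈ Finset.range (m+1), ((1 - X) * p).coeff n = p.coeff m := by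
  induction m with
  | zero => simp [sub_mul, coeff_sub]
  | succ m ih =>
      rw [Finset.sum_range_succ, ih]
      have : ((1 - X) * p).coeff (m+1) = p.coeff (m+1) - p.coeff m := by
        simp [sub_mul, coeff_sub, coeff_X_mul]
      rw [this]; ring

open Polynomial Finset in
private lemma symK_coeff_weight (c : ℤ) (q : ℤ[X]) (m : ℕ) :
    (c - 2*m) * q.coeff m = (C c * q - 2 * (X * derivative q)).coeff m := by
  rcases m with _ | m
  · simp [coeff_C_mul]
  · simp [coeff_C_mul, coeff_X_mul, coeff_derivative]
    ring

open Polynomial in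
private noncomputable def symKPab (a b : ℕ) : ℤ[X] :=
  (1+X)^a * (1-X)^b * (C ((a:ℤ)+b+3) + C (2*(b:ℤ) - 2*a + 2) * X + C ((a:ℤ)+b+3) * X^2)

open Polynomial in
private lemma symK_id1 (a b : ℕ) :
    C ((a:ℤ)+b+3) * ((1-X)^(b+2)*(1+X)^(a+1)) -
      2*(X * derivative ((1-X:ℤ[X])^(b+2)*(1+X)^(a+1))) = (1-X) * symKPab a b := by
  have h1 : b + 2 - 1 = b + 1 := rfl
  have h2 : 2 + b - 1 = b + 1 := by omega
  simp only [symKPab, derivative_mul, derivative_pow, derivative_one, derivative_X,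
    derivative_sub, derivative_add, Nat.add_sub_cancel, h1, h2, map_add, map_natCast,
    map_ofNat, map_sub, map_mul, map_one, Nat.cast_add, Nat.cast_ofNat, Nat.cast_one]
  ring

open Polynomial in
private lemma symK_id2 (a b : ℕ) :
    C ((a:ℤ)+1) * ((1-X)^(b+2) * (1+X)^a) + C ((b:ℤ)+2) * ((1-X)^b * (1+X)^(a+2))
      = symKPab a b := by
  simp only [symKPab, map_add, map_natCast, map_ofNat, map_sub, map_mul, map_one,
    Nat.cast_add, Nat.cast_ofNat, Nat.cast_one]
  ring

open Polynomial in
private lemma symK_id3 (a b : ℕ) :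
    C ((a:ℤ)+b+2) * ((1-X)^(b+1)*(1+X)^(a+1)) -
      2*(X * derivative ((1-X:ℤ[X])^(b+1)*(1+X)^(a+1))) + (1-X)^b*(1+X)^(a+2)
      = symKPab a b := by
  have h1 : b + 1 - 1 = b := rfl
  have h2 : 1 + b - 1 = b := by omega
  simp only [symKPab, derivative_mul, derivative_pow, derivative_one, derivative_X,
    derivative_sub, derivative_add, Nat.add_sub_cancel, h1, h2, map_add, map_natCast,
    map_ofNat, map_sub, map_mul, map_one, Nat.cast_add, Nat.cast_ofNat, Nat.cast_one]
  ring

open Polynomial in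
private lemma symKrawtchouk_eq_coeff (N n j : ℕ) :
    symKrawtchouk N n j = (((1 - X)^j * (1 + X)^(N-j) : ℤ[X])).coeff n :=
  symK_sum_eq_coeff N n j

/-- Weighted partial column sums:
`∑_{n=0}^m (N−2n)·Φ^N_{n,j} = (N−j)·Φ^{N−1}_{m,j} + j·Φ^{N−1}_{m,j−2}
 = (N−1−2m)·Φ^{N−1}_{m,j−1} + Φ^{N−1}_{m,j−2}`. -/
theorem symKrawtchouk_partial_column_sum (N j m : ℕ)
    (hN : 3 ≤ N) (hj2 : 2 ≤ j) (hj : j ≤ N - 1) (hm : m ≤ N - 1) :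
    (∑ n ∈ Finset.range (m + 1), ((N : ℤ) - 2 * n) * symKrawtchouk N n j =
        ((N : ℤ) - j) * symKrawtchouk (N - 1) m j + (j : ℤ) * symKrawtchouk (N - 1) m (j - 2)) ∧
      (∑ n ∈ Finset.range (m + 1), ((N : ℤ) - 2 * n) * symKrawtchouk N n j =
        ((N : ℤ) - 1 - 2 * m) * symKrawtchouk (N - 1) m (j - 1)
          + symKrawtchouk (N - 1) m (j - 2)) := by
  open Polynomial in
  obtain ⟨a, b, hj_eq, hN_eq⟩ : ∃ a b : ℕ, j = b + 2 ∧ N = a + b + 3 :=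
    ⟨N - 1 - j, j - 2, by omega, by omega⟩
  subst hj_eq hN_eq
  -- normalize all the nat subtractions
  have e1 : a + b + 3 - (b + 2) = a + 1 := by omega
  have e2 : a + b + 3 - 1 = a + b + 2 := by omega
  have e3 : a + b + 2 - (b + 2) = a := by omega
  have e4 : b + 2 - 2 = b := by omega
  have e5 : a + b + 2 - b = a + 2 := by omega
  have e6 : b + 2 - 1 = b + 1 := by omega
  have e7 : a + b + 2 - (b + 1) = a + 1 := by omega
  -- common value: coeff m of symKPab a b
  set f : ℤ[X] := (1 - X)^(b+2) * (1 + X)^(a+1) with hf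
  have hLHS : ∑ n ∈ Finset.range (m + 1),
      ((↑(a + b + 3) : ℤ) - 2 * n) * symKrawtchouk (a+b+3) n (b+2)
      = (symKPab a b).coeff m := by
    have step : ∀ n, ((↑(a + b + 3) : ℤ) - 2 * n) * symKrawtchouk (a+b+3) n (b+2)
        = ((1 - X) * symKPab a b).coeff n := by
      intro n
      rw [symKrawtchouk_eq_coeff, e1, ← hf]
      have : ((a + b + 3 : ℕ) : ℤ) = ((a:ℤ)+b+3) := by push_cast; ring
      rw [this, symK_coeff_weight ((a:ℤ)+b+3) f n, ← symK_id1 a b, hf]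
    rw [Finset.sum_congr rfl fun n _ => step n, symK_sum_coeff_one_sub_X_mul]
  constructor
  · rw [hLHS, symKrawtchouk_eq_coeff, symKrawtchouk_eq_coeff, e2, e3, e4, e5]
    have c1 : ((↑(a+b+3) : ℤ) - ↑(b+2)) = ((a:ℤ)+1) := by push_cast; ring
    have c2 : ((↑(b+2) : ℕ) : ℤ) = ((b:ℤ)+2) := by push_cast; ring
    rw [c1, c2, ← symK_id2 a b]
    simp only [coeff_add, coeff_C_mul]
  · rw [hLHS, symKrawtchouk_eq_coeff, symKrawtchouk_eq_coeff, e2, e4, e5, e6, e7]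
    have c3 : ((↑(a+b+3) : ℤ) - 1 - 2*m) = ((a:ℤ)+b+2) - 2*m := by push_cast; ring
    rw [c3, symK_coeff_weight ((a:ℤ)+b+2) _ m, ← coeff_add, symK_id3 a b]
end

section
/- For every integer m ≥ 1, the symmetric Krawtchouk matrix of even order N = 2m has entries Φ^{2m}_{m−1,1} = C_m, Φ^{2m}_{m+1,1} = −C_m, and Φ^{2m}_{m,2} = −2·C_{m−1}, where C_m denotes the m-th Catalan number. -/
lemma catalan_choose (n : ℕ) :
    catalan (n+1) + (2*n+2).choose n = (2*n+2).choose (n+1) := by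
  apply Nat.eq_of_mul_eq_mul_left (show 0 < n+2 by omega)
  have h1 : (n + 2) * catalan (n+1) = (n+1).centralBinom := succ_mul_catalan_eq_centralBinom (n+1)
  have h2 : (2*n+2).choose (n+1) * (n+1) = (2*n+2).choose n * (2*n+2 - n) :=
    Nat.choose_succ_right_eq (2*n+2) n
  have h4 : 2*n+2 - n = n+2 := by omega
  rw [h4] at h2
  have h3 : (n+1).centralBinom = (2*n+2).choose (n+1) := by
    rw [Nat.centralBinom]; ring_nf
  rw [Nat.mul_add, h1, h3]
  nlinarith [h2]

lemma catalan_choose_int (n : ℕ) :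
    (catalan (n+1) : ℤ) = (2*n+2).choose (n+1) - (2*n+2).choose n := by
  have := catalan_choose n
  push_cast [← this]
  ring

/-- Catalan connection, even order `N = 2m`:
`Φ^{2m}_{m−1,1} = C_m`, `Φ^{2m}_{m+1,1} = −C_m`, `Φ^{2m}_{m,2} = −2·C_{m−1}`. -/
theorem symKrawtchouk_catalan_even (m : ℕ) (hm : 1 ≤ m) :
    symKrawtchouk (2 * m) (m - 1) 1 = (catalan m : ℤ) ∧
      symKrawtchouk (2 * m) (m + 1) 1 = -(catalan m : ℤ) ∧
      symKrawtchouk (2 * m) m 2 = -2 * (catalan (m - 1) : ℤ) := by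
  match m, hm with
  | 1, _ => refine ⟨?_, ?_, ?_⟩ <;> simp [symKrawtchouk, Finset.sum_range_succ, catalan_one]
  | (k+2), _ =>
    have e1 : 2 * (k+2) - 1 = 2*k+3 := by omega
    have e2 : 2 * (k+2) - 2 = 2*k+2 := by omega
    have e3 : k + 2 - 1 = k + 1 := by omega
    have s1 : (2*k+3).choose (k+2) = (2*k+3).choose (k+1) := by
      have := Nat.choose_symm (show k+1 ≤ 2*k+3 by omega)
      have h : 2*k+3 - (k+1) = k+2 := by omega
      rwa [h] at this
    have s2 : (2*k+3).choose (k+3) = (2*k+3).choose k := by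
      have := Nat.choose_symm (show k+3 ≤ 2*k+3 by omega)
      have h : 2*k+3 - (k+3) = k := by omega
      rw [h] at this; omega
    have s3 : (2*k+2).choose (k+2) = (2*k+2).choose k := by
      have := Nat.choose_symm (show k+2 ≤ 2*k+2 by omega)
      have h : 2*k+2 - (k+2) = k := by omega
      rw [h] at this; omega
    have p1 : (2*k+4).choose (k+2) = (2*k+3).choose (k+1) + (2*k+3).choose (k+2) :=
      Nat.choose_succ_succ (2*k+3) (k+1)
    have p2 : (2*k+4).choose (k+1) = (2*k+3).choose k + (2*k+3).choose (k+1) :=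
      Nat.choose_succ_succ (2*k+3) k
    have c2 : (catalan (k+2) : ℤ) = (2*k+4).choose (k+2) - (2*k+4).choose (k+1) := by
      have := catalan_choose_int (k+1)
      have h : 2*(k+1)+2 = 2*k+4 := by omega
      rw [h] at this; convert this using 3 <;> omega
    have c1 : (catalan (k+1) : ℤ) = (2*k+2).choose (k+1) - (2*k+2).choose k :=
      catalan_choose_int k
    refine ⟨?_, ?_, ?_⟩ <;>
      simp only [symKrawtchouk, Finset.sum_range_succ, Finset.sum_range_zero, e1, e2, e3] <;>
      norm_num
    · rw [c2]
      push_cast [p1, p2, s1]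
      ring
    · have h3 : k + 2 + 1 = k + 3 := by omega
      rw [h3, c2]
      push_cast [p1, p2, s1, s2]
      ring
    · rw [c1]
      push_cast [s3]
      ring
end

section
/- For every integer m ≥ 1, the symmetric Krawtchouk matrix of odd order N = 2m+1 has entries Φ^{2m+1}_{m,1} = C_m and Φ^{2m+1}_{m,2} = Φ^{2m+1}_{m+1,1} = Φ^{2m+1}_{m+1,2} = −C_m, where C_m denotes the m-th Catalan number. -/
private lemma aux_L1 (p : ℕ) :
    ((2*p+4).choose (p+2) : ℤ) - (2*p+4).choose (p+1) = catalan (p+2) := by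
  have h1 : (2*p+4).choose (p+2) * (p+2) = (2*p+4).choose (p+1) * (p+3) := by
    have := Nat.choose_succ_right_eq (2*p+4) (p+1)
    simpa [show 2*p+4 - (p+1) = p+3 by omega] using this
  have h2 : (p+3) * catalan (p+2) = (2*p+4).choose (p+2) := by
    have := succ_mul_catalan_eq_centralBinom (p+2)
    simpa [Nat.centralBinom, show 2*(p+2) = 2*p+4 by ring] using this
  have key : ((p:ℤ)+3) * (((2*p+4).choose (p+2) : ℤ) - (2*p+4).choose (p+1))
      = ((p:ℤ)+3) * (catalan (p+2) : ℤ) := by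
    have c1 := congrArg (Nat.cast : ℕ → ℤ) h1
    have c2 := congrArg (Nat.cast : ℕ → ℤ) h2
    push_cast at c1 c2
    linarith [c1, c2]
  exact mul_left_cancel₀ (by positivity) key

private lemma aux_L2 (p : ℕ) :
    ((2*p+3).choose (p+1) : ℤ) - (2*p+3).choose p = catalan (p+2) := by
  have h1 : (2*p+3).choose (p+1) * (p+1) = (2*p+3).choose p * (p+3) := by
    have := Nat.choose_succ_right_eq (2*p+3) p
    simpa [show 2*p+3 - p = p+3 by omega] using this
  have h2 : (p+3) * catalan (p+2) = (2*p+4).choose (p+2) := by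
    have := succ_mul_catalan_eq_centralBinom (p+2)
    simpa [Nat.centralBinom, show 2*(p+2) = 2*p+4 by ring] using this
  have h3 : (2*p+4).choose (p+2) = 2 * (2*p+3).choose (p+1) := by
    have hsucc : (2*p+4).choose (p+2) = (2*p+3).choose (p+1) + (2*p+3).choose (p+2) := by
      exact Nat.choose_succ_succ (2*p+3) (p+1)
    have hsym : (2*p+3).choose (p+2) = (2*p+3).choose (p+1) := by
      rw [← Nat.choose_symm (by omega : p+1 ≤ 2*p+3)]
      congr 1
      omega
    omega
  have key : ((p:ℤ)+3) * (((2*p+3).choose (p+1) : ℤ) - (2*p+3).choose p)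
      = ((p:ℤ)+3) * (catalan (p+2) : ℤ) := by
    have c1 := congrArg (Nat.cast : ℕ → ℤ) h1
    have c2 := congrArg (Nat.cast : ℕ → ℤ) h2
    have c3 := congrArg (Nat.cast : ℕ → ℤ) h3
    push_cast at c1 c2 c3
    linarith [c1, c2, c3]
  exact mul_left_cancel₀ (by positivity) key

/-- Catalan connection, odd order `N = 2m+1`:
`Φ^{2m+1}_{m,1} = C_m` and `Φ^{2m+1}_{m,2} = Φ^{2m+1}_{m+1,1} = Φ^{2m+1}_{m+1,2} = −C_m`. -/
theorem symKrawtchouk_catalan_odd (m : ℕ) (hm : 1 ≤ m) :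
    symKrawtchouk (2 * m + 1) m 1 = (catalan m : ℤ) ∧
      symKrawtchouk (2 * m + 1) m 2 = -(catalan m : ℤ) ∧
      symKrawtchouk (2 * m + 1) (m + 1) 1 = -(catalan m : ℤ) ∧
      symKrawtchouk (2 * m + 1) (m + 1) 2 = -(catalan m : ℤ) := by
  rcases m with _ | _ | p
  · omega
  · refine ⟨?_, ?_, ?_, ?_⟩ <;>
      simp [symKrawtchouk, Finset.sum_range_succ, catalan_one]
  · -- m = p + 2
    have e1 : 2 * (p+2) + 1 - 1 = 2*p+4 := by omega
    have e2 : 2 * (p+2) + 1 - 2 = 2*p+3 := by omega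
    have s1 : (2*p+4).choose (p+3) = (2*p+4).choose (p+1) := by
      rw [← Nat.choose_symm (by omega : p+1 ≤ 2*p+4)]; congr 1; omega
    have s2 : (2*p+3).choose (p+2) = (2*p+3).choose (p+1) := by
      rw [← Nat.choose_symm (by omega : p+1 ≤ 2*p+3)]; congr 1; omega
    have s3 : (2*p+3).choose (p+3) = (2*p+3).choose p := by
      rw [← Nat.choose_symm (by omega : p ≤ 2*p+3)]; congr 1; omega
    have L1 := aux_L1 p
    have L2 := aux_L2 p
    refine ⟨?_, ?_, ?_, ?_⟩ <;>
      simp only [symKrawtchouk, Finset.sum_range_succ, Finset.sum_range_zero, e1, e2] <;>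
      norm_num [show p+2-1 = p+1 by omega, show p+2-2 = p by omega, show p+1+2 = p+3 by omega,
        show p+2+1-1 = p+2 by omega, show p+2+1-2 = p+1 by omega, show p+2+1 = p+3 by omega,
        s1, s2, s3] <;>
      linarith [L1, L2]
end

section
/- For every integer n ≥ 0, the weighted sum ∑_{α=0}^{⌊n/2⌋} (n+1−2α) · ( C(n,α) − C(n,α−1) )², with the convention C(n,−1) = 0, equals C(n, n/2)² when n is even, and equals 2 · C(n, (n−1)/2) · C(n−1, (n−1)/2) when n is odd. -/
/-- Partial sum closed form: `∑_{α≤k} (n+1−2α)(C(n,α)−C(n,α−1))²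
= (n+1)·C(n,k)² − 4k·C(n,k)·C(n−1,k)`. -/
lemma weighted_partial_sum (n : ℕ) : ∀ k : ℕ, 2 * k ≤ n →
    ∑ α ∈ Finset.range (k + 1),
        ((n : ℤ) + 1 - 2 * α) *
          ((n.choose α : ℤ) - if α = 0 then 0 else (n.choose (α - 1) : ℤ)) ^ 2 =
      ((n : ℤ) + 1) * (n.choose k : ℤ) ^ 2 -
        4 * k * (n.choose k : ℤ) * ((n - 1).choose k : ℤ) := by
  intro k
  induction k with
  | zero => intro _; simp
  | succ k ih =>
    intro hk
    obtain ⟨m, rfl⟩ : ∃ m, n = m + 1 := ⟨n - 1, by omega⟩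
    rw [Finset.sum_range_succ, ih (by omega)]
    simp only [Nat.add_sub_cancel, Nat.succ_ne_zero, if_false, Nat.add_sub_cancel]
    have hkm : k + 1 ≤ m := by omega
    set a : ℤ := (m.choose (k + 1) : ℤ) with ha
    set b : ℤ := (m.choose k : ℤ) with hb
    set c : ℤ := if k = 0 then 0 else (m.choose (k - 1) : ℤ) with hc
    have h1 : (((m + 1).choose (k + 1) : ℕ) : ℤ) = b + a := by
      rw [Nat.choose_succ_succ]; push_cast; ring
    have h2 : (((m + 1).choose k : ℕ) : ℤ) = c + b := by
      rcases Nat.eq_zero_or_pos k with hk0 | hk0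
      · subst hk0; simp [hc, hb]
      · obtain ⟨j, rfl⟩ : ∃ j, k = j + 1 := ⟨k - 1, by omega⟩
        rw [Nat.choose_succ_succ]
        simp only [hc, hb, Nat.add_sub_cancel, Nat.succ_ne_zero, if_false]
        push_cast; ring
    have r1 : ((k : ℤ) + 1) * a = ((m : ℤ) - k) * b := by
      have h := Nat.choose_succ_right_eq m k
      zify [show k ≤ m by omega] at h
      rw [ha, hb]; linarith [h]
    have r2 : (k : ℤ) * b = ((m : ℤ) + 1 - k) * c := by
      rcases Nat.eq_zero_or_pos k with hk0 | hk0
      · subst hk0; simp [hc]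
      · obtain ⟨j, rfl⟩ : ∃ j, k = j + 1 := ⟨k - 1, by omega⟩
        have h := Nat.choose_succ_right_eq m j
        zify [show j ≤ m by omega] at h
        simp only [hc, hb, Nat.add_sub_cancel, Nat.succ_ne_zero, if_false]
        push_cast
        linarith [h]
    rw [h1, h2]
    push_cast
    linear_combination (2 * a + 2 * c) * r1 + (2 * a - 4 * b - 2 * c) * r2

/-- The weighted sum `∑_{α=0}^{⌊n/2⌋} (n+1−2α)·(C(n,α) − C(n,α−1))²` (with
`C(n,−1) = 0`) equals `C(n,n/2)²` for even `n`, and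
`2·C(n,(n−1)/2)·C(n−1,(n−1)/2)` for odd `n`. -/
theorem weighted_sum_sq_multiplicities (n : ℕ) :
    (Even n →
        ∑ α ∈ Finset.range (n / 2 + 1),
            ((n : ℤ) + 1 - 2 * α) *
              ((n.choose α : ℤ) - if α = 0 then 0 else (n.choose (α - 1) : ℤ)) ^ 2 =
          (n.choose (n / 2) : ℤ) ^ 2) ∧
      (Odd n →
        ∑ α ∈ Finset.range (n / 2 + 1),
            ((n : ℤ) + 1 - 2 * α) *
              ((n.choose α : ℤ) - if α = 0 then 0 else (n.choose (α - 1) : ℤ)) ^ 2 =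
          2 * (n.choose ((n - 1) / 2) : ℤ) * ((n - 1).choose ((n - 1) / 2) : ℤ)) := by
  constructor
  · intro hev
    obtain ⟨m, rfl⟩ : ∃ m, n = 2 * m := by
      obtain ⟨m, hm⟩ := hev; exact ⟨m, by omega⟩
    have hd : 2 * m / 2 = m := by omega
    rw [hd, weighted_partial_sum (2 * m) m (le_refl _)]
    rcases Nat.eq_zero_or_pos m with h0 | h0
    · subst h0; simp
    · obtain ⟨j, rfl⟩ : ∃ j, m = j + 1 := ⟨m - 1, by omega⟩
      have hsub : 2 * (j + 1) - 1 = 2 * j + 1 := by omega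
      rw [hsub]
      have hP : (2 * (j + 1)).choose (j + 1) = 2 * ((2 * j + 1).choose (j + 1)) := by
        have he : 2 * (j + 1) = (2 * j + 1) + 1 := by omega
        rw [he, Nat.choose_succ_succ]
        have hsym : (2 * j + 1).choose j = (2 * j + 1).choose (j + 1) := by
          have := Nat.choose_symm (show j + 1 ≤ 2 * j + 1 by omega)
          simpa [show 2 * j + 1 - (j + 1) = j by omega] using this
        simp only [Nat.succ_eq_add_one]
        omega
      have hPZ : ((2 * (j + 1)).choose (j + 1) : ℤ)
          = 2 * ((2 * j + 1).choose (j + 1) : ℤ) := by exact_mod_cast hP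
      push_cast
      linear_combination (2 * (j : ℤ) + 2) * ((2 * (j + 1)).choose (j + 1) : ℤ) * hPZ
  · intro hod
    obtain ⟨m, rfl⟩ : ∃ m, n = 2 * m + 1 := hod
    have hd : (2 * m + 1) / 2 = m := by omega
    have hd2 : (2 * m + 1 - 1) / 2 = m := by omega
    have hsub : 2 * m + 1 - 1 = 2 * m := by omega
    rw [hd, hd2, hsub, weighted_partial_sum (2 * m + 1) m (by omega)]
    rw [hsub]
    have h := Nat.add_one_mul_choose_eq (2 * m) m
    have hsym : (2 * m + 1).choose (m + 1) = (2 * m + 1).choose m := by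
      have := Nat.choose_symm (show m + 1 ≤ 2 * m + 1 by omega)
      simpa [show 2 * m + 1 - (m + 1) = m by omega] using this.symm
    rw [hsym] at h
    have hZ : ((2 * m : ℤ) + 1) * ((2 * m).choose m : ℤ)
        = ((2 * m + 1).choose m : ℤ) * ((m : ℤ) + 1) := by exact_mod_cast h
    push_cast
    linear_combination (-2 : ℤ) * ((2 * m + 1).choose m : ℤ) * hZ
end
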